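/- arXiv:1712.00599 — 9 statements merged into one kernel-verified Lean document; each statement's English description precedes it below -/
import Mathlib

section
/- The set of minimizers of ℓ ↦ U(ℓ, μ) over [0, R] is characterized as follows: if 0 ≤ μ < 1/F, the unique minimizer is ℓ = m; if μ = 1/F, the set of minimizers is exactly the interval [0, m]; and if μ > 1/F, the unique minimizer is ℓ = 0. -/
/-- The user's cost: latency plus payment. -/
noncomputable def cost (β F C R μ ℓ : ℝ) : ℝ := max ((R - ℓ) * C / F) (β * ℓ) + μ * ℓ * C

/-- The threshold m = C·R/(β·F + C). -/
noncomputable def thresh (β F C R : ℝ) : ℝ := C * R / (β * F + C)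

/-!
The latency `max ((R - ℓ) C / F) (β ℓ)` switches from its decreasing to its increasing branch
exactly at `ℓ = m`. Hence on `[0, m]` the cost is affine with slope `(μ - 1/F) C`, and on `[m, R]`
it is affine with positive slope `β + μ C`. The sign of `μ - 1/F` decides whether the cost
first decreases, stays constant, or increases, which locates the minimizers.
-/

open Set

section IsMinOn

variable {α β : Type*} [LinearOrder α] [Preorder β] {f : α → β} {a m b x : α}

theorem isMinOn_Icc_iff_of_strictAntiOn_of_strictMonoOn (h₁ : StrictAntiOn f (Icc a m))
    (h₂ : StrictMonoOn f (Icc m b)) (hm : m ∈ Icc a b) (hx : x ∈ Icc a b) :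
    IsMinOn f (Icc a b) x ↔ x = m := by
  rw [isMinOn_iff]
  constructor
  · intro hmin
    rcases lt_trichotomy x m with hxm | hxm | hxm
    · exact absurd (hmin m hm) (h₁ ⟨hx.1, hxm.le⟩ ⟨hm.1, le_rfl⟩ hxm).not_ge
    · exact hxm
    · exact absurd (hmin m hm) (h₂ ⟨le_rfl, hm.2⟩ ⟨hxm.le, hx.2⟩ hxm).not_ge
  · rintro rfl y hy
    rcases le_total y x with hyx | hxy
    · exact h₁.antitoneOn ⟨hy.1, hyx⟩ ⟨hm.1, le_rfl⟩ hyx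
    · exact h₂.monotoneOn ⟨le_rfl, hm.2⟩ ⟨hxy, hy.2⟩ hxy

theorem isMinOn_Icc_iff_eq_left_of_strictMonoOn (hf : StrictMonoOn f (Icc a b))
    (hx : x ∈ Icc a b) : IsMinOn f (Icc a b) x ↔ x = a :=
  isMinOn_Icc_iff_of_strictAntiOn_of_strictMonoOn ((subsingleton_Icc_of_ge le_rfl).strictAntiOn f) hf
    (left_mem_Icc.2 (hx.1.trans hx.2)) hx

theorem isMinOn_Icc_iff_of_eqOn_of_strictMonoOn (h₁ : EqOn f (fun _ ↦ f m) (Icc a m))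
    (h₂ : StrictMonoOn f (Icc m b)) (hm : m ∈ Icc a b) (hx : x ∈ Icc a b) :
    IsMinOn f (Icc a b) x ↔ x ∈ Icc a m := by
  rw [isMinOn_iff]
  constructor
  · intro hmin
    refine ⟨hx.1, not_lt.1 fun hmx ↦ ?_⟩
    exact (hmin m hm).not_gt (h₂ ⟨le_rfl, hm.2⟩ ⟨hmx.le, hx.2⟩ hmx)
  · intro hxm y hy
    rw [h₁ hxm]
    rcases le_total y m with hym | hmy
    · exact (h₁ ⟨hy.1, hym⟩).ge
    · exact h₂.monotoneOn ⟨le_rfl, hm.2⟩ ⟨hmy, hy.2⟩ hmy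

end IsMinOn

section Cost

variable {β F C R : ℝ} (μ : ℝ)

theorem thresh_mem_Icc (hβ : 0 < β) (hF : 0 < F) (hC : 0 < C) (hR : 0 < R) :
    thresh β F C R ∈ Icc 0 R := by
  have hD : 0 < β * F + C := by positivity
  refine ⟨by unfold thresh; positivity, ?_⟩
  rw [thresh, div_le_iff₀ hD]
  nlinarith [mul_pos (mul_pos hβ hF) hR]

theorem le_thresh_iff (hβ : 0 < β) (hF : 0 < F) (hC : 0 < C) {ℓ : ℝ} :
    ℓ ≤ thresh β F C R ↔ β * ℓ ≤ (R - ℓ) * C / F := by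
  have hD : 0 < β * F + C := by positivity
  rw [thresh, le_div_iff₀ hD, le_div_iff₀ hF]
  constructor <;> intro h <;> linarith

theorem thresh_le_iff (hβ : 0 < β) (hF : 0 < F) (hC : 0 < C) {ℓ : ℝ} :
    thresh β F C R ≤ ℓ ↔ (R - ℓ) * C / F ≤ β * ℓ := by
  have hD : 0 < β * F + C := by positivity
  rw [thresh, div_le_iff₀ hD, div_le_iff₀ hF]
  constructor <;> intro h <;> linarith

theorem cost_of_le_thresh (hβ : 0 < β) (hF : 0 < F) (hC : 0 < C) {ℓ : ℝ}
    (hℓ : ℓ ≤ thresh β F C R) :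
    cost β F C R μ ℓ = R * C / F + (μ - 1 / F) * C * ℓ := by
  rw [cost, max_eq_left ((le_thresh_iff hβ hF hC).1 hℓ)]
  field_simp
  ring

theorem cost_of_thresh_le (hβ : 0 < β) (hF : 0 < F) (hC : 0 < C) {ℓ : ℝ}
    (hℓ : thresh β F C R ≤ ℓ) : cost β F C R μ ℓ = (β + μ * C) * ℓ := by
  rw [cost, max_eq_right ((thresh_le_iff hβ hF hC).1 hℓ)]
  ring

variable {μ}

theorem strictMonoOn_cost_Ici (hβ : 0 < β) (hF : 0 < F) (hC : 0 < C) (hμ : 0 ≤ μ) :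
    StrictMonoOn (cost β F C R μ) (Ici (thresh β F C R)) := by
  intro a ha b hb hab
  rw [cost_of_thresh_le μ hβ hF hC ha, cost_of_thresh_le μ hβ hF hC hb]
  exact mul_lt_mul_of_pos_left hab (by positivity)

theorem strictAntiOn_cost_Iic (hβ : 0 < β) (hF : 0 < F) (hC : 0 < C) (hμF : μ < 1 / F) :
    StrictAntiOn (cost β F C R μ) (Iic (thresh β F C R)) := by
  intro a ha b hb hab
  rw [cost_of_le_thresh μ hβ hF hC ha, cost_of_le_thresh μ hβ hF hC hb]
  have hslope : (μ - 1 / F) * C < 0 := mul_neg_of_neg_of_pos (sub_neg.2 hμF) hC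
  linarith [mul_lt_mul_of_neg_left hab hslope]

theorem strictMonoOn_cost_Iic (hβ : 0 < β) (hF : 0 < F) (hC : 0 < C) (hμF : 1 / F < μ) :
    StrictMonoOn (cost β F C R μ) (Iic (thresh β F C R)) := by
  intro a ha b hb hab
  rw [cost_of_le_thresh μ hβ hF hC ha, cost_of_le_thresh μ hβ hF hC hb]
  have hslope : 0 < (μ - 1 / F) * C := mul_pos (sub_pos.2 hμF) hC
  linarith [mul_lt_mul_of_pos_left hab hslope]

theorem eqOn_cost_Iic (hβ : 0 < β) (hF : 0 < F) (hC : 0 < C) :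
    EqOn (cost β F C R (1 / F)) (fun _ ↦ cost β F C R (1 / F) (thresh β F C R))
      (Iic (thresh β F C R)) := by
  intro ℓ hℓ
  simp only [cost_of_le_thresh _ hβ hF hC hℓ, cost_of_le_thresh _ hβ hF hC le_rfl, sub_self,
    zero_mul]

end Cost

/-- Characterization of the set of minimizers of ℓ ↦ U(ℓ, μ) over [0, R]. -/
theorem stmt_4 (β F C R : ℝ) (hβ : 0 < β) (hF : 0 < F) (hC : 0 < C) (hR : 0 < R)
    (μ : ℝ) (hμ : 0 ≤ μ) :
    (μ < 1 / F →
      ∀ ℓ ∈ Set.Icc (0 : ℝ) R,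
        ((∀ ℓ' ∈ Set.Icc (0 : ℝ) R, cost β F C R μ ℓ ≤ cost β F C R μ ℓ') ↔
          ℓ = thresh β F C R)) ∧
    (μ = 1 / F →
      ∀ ℓ ∈ Set.Icc (0 : ℝ) R,
        ((∀ ℓ' ∈ Set.Icc (0 : ℝ) R, cost β F C R μ ℓ ≤ cost β F C R μ ℓ') ↔
          ℓ ∈ Set.Icc (0 : ℝ) (thresh β F C R))) ∧
    (1 / F < μ →
      ∀ ℓ ∈ Set.Icc (0 : ℝ) R,
        ((∀ ℓ' ∈ Set.Icc (0 : ℝ) R, cost β F C R μ ℓ ≤ cost β F C R μ ℓ') ↔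
          ℓ = 0)) := by
  have hm := thresh_mem_Icc hβ hF hC hR
  have hright : StrictMonoOn (cost β F C R μ) (Icc (thresh β F C R) R) :=
    (strictMonoOn_cost_Ici hβ hF hC hμ).mono Icc_subset_Ici_self
  refine ⟨fun hμF ℓ hℓ ↦ ?_, fun hμF ℓ hℓ ↦ ?_, fun hμF ℓ hℓ ↦ ?_⟩ <;> rw [← isMinOn_iff]
  · exact isMinOn_Icc_iff_of_strictAntiOn_of_strictMonoOn
      ((strictAntiOn_cost_Iic hβ hF hC hμF).mono Icc_subset_Iic_self) hright hm hℓ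
  · subst hμF
    exact isMinOn_Icc_iff_of_eqOn_of_strictMonoOn
      ((eqOn_cost_Iic hβ hF hC).mono Icc_subset_Iic_self) hright hm hℓ
  · have hmono : StrictMono (cost β F C R μ) :=
      (strictMonoOn_cost_Iic hβ hF hC hμF).Iic_union_Ici (strictMonoOn_cost_Ici hβ hF hC hμ)
    exact isMinOn_Icc_iff_eq_left_of_strictMonoOn (hmono.strictMonoOn _) hℓ
end

section
/- (Proposition 1, threshold-based offloading policy) For every price μ ≥ 0, the point ℓ*(μ) = m·x, where x = 1 if μ ≤ 1/F and x = 0 if μ > 1/F, is a minimizer of ℓ ↦ U(ℓ, μ) over [0, R]; that is, U(ℓ*(μ), μ) ≤ U(ℓ, μ) for all ℓ ∈ [0, R]. -/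
/-- Proposition 1: the threshold-based policy ℓ*(μ) = m·x, with x = 1 iff μ ≤ 1/F,
minimizes the cost over [0, R]. -/
theorem stmt_5 (β F C R : ℝ) (hβ : 0 < β) (hF : 0 < F) (hC : 0 < C) (hR : 0 < R)
    (μ : ℝ) (hμ : 0 ≤ μ) :
    ∀ ℓ ∈ Set.Icc (0 : ℝ) R,
      cost β F C R μ (thresh β F C R * (if μ ≤ 1 / F then (1 : ℝ) else 0)) ≤
        cost β F C R μ ℓ := by
  intro ℓ hℓ
  obtain ⟨h0, hRℓ⟩ := hℓ
  have hD : 0 < β * F + C := by positivity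
  unfold cost thresh
  set m := C * R / (β * F + C) with hm
  have hmE : m * (β * F + C) = C * R := div_mul_cancel₀ _ hD.ne'
  have hm0 : 0 ≤ m := by positivity
  split_ifs with hμF
  · rw [mul_one]
    have hμF' : μ * F ≤ 1 := by
      rw [le_div_iff₀ hF] at hμF; linarith
    have heq : (R - m) * C / F = β * m := by
      rw [div_eq_iff hF.ne']; nlinarith [hmE]
    rw [heq, max_self]
    rcases le_total ℓ m with h | h
    · have h1 : (R - ℓ) * C / F ≤ max ((R - ℓ) * C / F) (β * ℓ) := le_max_left _ _
      have h2 : β * m + μ * m * C ≤ (R - ℓ) * C / F + μ * ℓ * C := by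
        rw [← heq, div_add' _ _ _ hF.ne', div_add' _ _ _ hF.ne', div_le_div_iff₀ hF hF]
        nlinarith [mul_nonneg (mul_nonneg (sub_nonneg.2 h) hC.le) (sub_nonneg.2 hμF')]
      linarith
    · have h1 : β * ℓ ≤ max ((R - ℓ) * C / F) (β * ℓ) := le_max_right _ _
      have h2 : β * m + μ * m * C ≤ β * ℓ + μ * ℓ * C := by
        nlinarith [mul_nonneg (mul_nonneg hμ (sub_nonneg.2 h)) hC.le,
          mul_nonneg hβ.le (sub_nonneg.2 h)]
      linarith
  · rw [mul_zero]
    simp only [sub_zero, mul_zero, zero_mul, add_zero]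
    rw [max_eq_left (by positivity : (0:ℝ) ≤ R * C / F)]
    push_neg at hμF
    have hμF' : 1 ≤ μ * F := by
      rw [div_lt_iff₀ hF] at hμF; linarith
    rcases le_total ℓ m with h | h
    · have h1 : (R - ℓ) * C / F ≤ max ((R - ℓ) * C / F) (β * ℓ) := le_max_left _ _
      have h2 : R * C / F ≤ (R - ℓ) * C / F + μ * ℓ * C := by
        rw [div_add' _ _ _ hF.ne', div_le_div_iff₀ hF hF]
        nlinarith [mul_nonneg (mul_nonneg h0 hC.le) (sub_nonneg.2 hμF')]
      linarith
    · have h1 : β * ℓ ≤ max ((R - ℓ) * C / F) (β * ℓ) := le_max_right _ _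
      have h2 : R * C / F ≤ β * ℓ + μ * ℓ * C := by
        rw [div_le_iff₀ hF]
        nlinarith [mul_nonneg (mul_nonneg h0 hC.le) (sub_nonneg.2 hμF'),
          mul_nonneg (sub_nonneg.2 h) hC.le,
          mul_nonneg (mul_nonneg hβ.le (sub_nonneg.2 h)) hF.le]
      linarith
end

section
/- For every price μ ≥ 0, the minimum of ℓ ↦ U(ℓ, μ) over [0, R] equals R·C/F + min(0, (μ − 1/F)·m·C). -/
/-- For every μ ≥ 0, the minimum of ℓ ↦ U(ℓ, μ) over [0, R] equals
R·C/F + min(0, (μ − 1/F)·m·C). -/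
theorem stmt_6 (β F C R : ℝ) (hβ : 0 < β) (hF : 0 < F) (hC : 0 < C) (hR : 0 < R)
    (μ : ℝ) (hμ : 0 ≤ μ) :
    IsLeast ((fun ℓ => cost β F C R μ ℓ) '' Set.Icc (0 : ℝ) R)
      (R * C / F + min 0 ((μ - 1 / F) * thresh β F C R * C)) := by
  have hden : 0 < β * F + C := by positivity
  set m := thresh β F C R with hmdef
  have hm0 : 0 < m := by rw [hmdef, thresh]; positivity
  have hmR : m ≤ R := by
    rw [hmdef, thresh, div_le_iff₀ hden]; nlinarith [mul_pos (mul_pos hβ hF) hR]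
  have hkey : (R - m) * C / F = β * m := by
    rw [hmdef, thresh]
    field_simp
    ring
  have heq : R * C / F + (μ - 1 / F) * m * C = β * m + μ * m * C := by
    have h1 : R * C / F - m * C / F = (R - m) * C / F := by ring
    have h2 : (μ - 1 / F) * m * C = μ * m * C - m * C / F := by ring
    linarith [hkey, h1, h2]
  by_cases h : 1 / F ≤ μ
  · have hmin : min 0 ((μ - 1 / F) * m * C) = 0 := by
      apply min_eq_left
      have : 0 ≤ μ - 1 / F := by linarith
      positivity
    rw [hmin]
    constructor
    · exact ⟨0, ⟨le_refl _, hR.le⟩, by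
        simp [cost]
        positivity⟩
    · rintro x ⟨ℓ, ⟨h0, hRℓ⟩, rfl⟩
      simp only [cost]
      have h1 : (R - ℓ) * C / F ≤ max ((R - ℓ) * C / F) (β * ℓ) := le_max_left _ _
      have h2 : 1 ≤ μ * F := by
        rw [div_le_iff₀ hF] at h; linarith
      have h3 : ℓ * C / F ≤ μ * ℓ * C := by
        rw [div_le_iff₀ hF]
        nlinarith [mul_nonneg (mul_nonneg h0 hC.le) hF.le]
      have h4 : R * C / F = (R - ℓ) * C / F + ℓ * C / F := by ring
      linarith
  · push_neg at h
    have hmin : min 0 ((μ - 1 / F) * m * C) = (μ - 1 / F) * m * C := by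
      apply min_eq_right
      have h' : μ - 1 / F ≤ 0 := by linarith
      nlinarith [mul_pos hm0 hC, h']
    rw [hmin]
    constructor
    · refine ⟨m, ⟨hm0.le, hmR⟩, ?_⟩
      simp only [cost, hkey, max_self]
      linarith [heq]
    · rintro x ⟨ℓ, ⟨h0, hRℓ⟩, rfl⟩
      simp only [cost]
      rw [heq]
      have hμF : μ * F < 1 := by rw [lt_div_iff₀ hF] at h; linarith
      by_cases hℓ : ℓ ≤ m
      · have h1 : (R - ℓ) * C / F ≤ max ((R - ℓ) * C / F) (β * ℓ) := le_max_left _ _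
        have h2 : β * m + μ * m * C ≤ (R - ℓ) * C / F + μ * ℓ * C := by
          rw [← hkey]
          rw [div_add' _ _ _ hF.ne', div_add' _ _ _ hF.ne', div_le_div_iff₀ hF hF]
          nlinarith [mul_nonneg (mul_nonneg (sub_nonneg.2 hℓ) hC.le) (sub_pos.2 hμF).le]
        linarith
      · push_neg at hℓ
        have h1 : β * ℓ ≤ max ((R - ℓ) * C / F) (β * ℓ) := le_max_right _ _
        have h2 : β * m + μ * m * C ≤ β * ℓ + μ * ℓ * C := by
          nlinarith [mul_nonneg hμ hC.le]
        linarith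
end

section
/- If 0 ≤ μ < 1/F, then offloading at the threshold strictly reduces the user's cost compared with computing everything locally: U(m, μ) < U(0, μ) = R·C/F. -/
/-- If 0 ≤ μ < 1/F, offloading at the threshold strictly beats pure local computing. -/
theorem stmt_7 (β F C R : ℝ) (hβ : 0 < β) (hF : 0 < F) (hC : 0 < C) (hR : 0 < R)
    (μ : ℝ) (hμ0 : 0 ≤ μ) (hμ1 : μ < 1 / F) :
    cost β F C R μ (thresh β F C R) < cost β F C R μ 0 ∧
      cost β F C R μ 0 = R * C / F := by
  have hD : 0 < β * F + C := by positivity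
  set m := thresh β F C R with hm
  have hmD : m * (β * F + C) = C * R := by
    rw [hm, thresh]; field_simp
  have hmpos : 0 < m := by rw [hm, thresh]; positivity
  have heq : (R - m) * C / F = β * m := by
    rw [div_eq_iff hF.ne']
    nlinarith [hmD]
  have hcost0 : cost β F C R μ 0 = R * C / F := by
    unfold cost
    norm_num
    positivity
  refine ⟨?_, hcost0⟩
  rw [hcost0]
  unfold cost
  rw [heq, max_self]
  have hμF : μ * F < 1 := by
    rw [lt_div_iff₀ hF] at hμ1; linarith
  rw [lt_div_iff₀ hF]
  nlinarith [mul_pos hmpos hC, mul_pos (mul_pos hmpos hC) hF]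
end

section
/- (Appendix B key step) Suppose 1/F_1 < 1/F_2 < … < 1/F_K and let i ∈ {1, …, K−1}. For every price μ with 1/F_i < μ < 1/F_{i+1}, each user's best response is unchanged when the price is raised to 1/F_{i+1}: ℓ_k(μ) = ℓ_k(1/F_{i+1}) for all k, hence L(μ) = L(1/F_{i+1}); moreover U_B(1/F_{i+1}) ≥ U_B(μ), with strict inequality whenever L(μ) > 0. -/
/-- User k's best-response offloaded data size at price μ. -/
noncomputable def br {K : ℕ} (m F : Fin K → ℝ) (μ : ℝ) (k : Fin K) : ℝ :=
  if μ ≤ 1 / F k then m k else 0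

/-- The cloud's offloaded load L(μ) = Σ_k ℓ_k(μ)·C_k. -/
noncomputable def load {K : ℕ} (m C F : Fin K → ℝ) (μ : ℝ) : ℝ :=
  ∑ k, br m F μ k * C k

/-- The cloud's revenue U_B(μ) = μ·L(μ). -/
noncomputable def rev {K : ℕ} (m C F : Fin K → ℝ) (μ : ℝ) : ℝ :=
  μ * load m C F μ

/-- Appendix B key step: for a price strictly between consecutive thresholds
1/F_i and 1/F_{i+1}, raising the price to 1/F_{i+1} leaves every best response
(and hence the load) unchanged and does not decrease the revenue, strictly
increasing it whenever the load is positive. -/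
theorem stmt_9 (K : ℕ) (hK : 1 ≤ K) (m C F : Fin K → ℝ)
    (hm : ∀ k, 0 < m k) (hC : ∀ k, 0 < C k) (hF : ∀ k, 0 < F k)
    (hsort : ∀ j k : Fin K, j < k → 1 / F j < 1 / F k)
    (i : Fin K) (hi : (i : ℕ) + 1 < K)
    (μ : ℝ) (hμ0 : 0 < μ) (hμ1 : 1 / F i < μ) (hμ2 : μ < 1 / F ⟨(i : ℕ) + 1, hi⟩) :
    (∀ k, br m F μ k = br m F (1 / F ⟨(i : ℕ) + 1, hi⟩) k) ∧
      load m C F μ = load m C F (1 / F ⟨(i : ℕ) + 1, hi⟩) ∧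
      rev m C F μ ≤ rev m C F (1 / F ⟨(i : ℕ) + 1, hi⟩) ∧
      (0 < load m C F μ → rev m C F μ < rev m C F (1 / F ⟨(i : ℕ) + 1, hi⟩)) := by
  set μ' := 1 / F ⟨(i : ℕ) + 1, hi⟩ with hμ'
  have hbr : ∀ k, br m F μ k = br m F μ' k := by
    intro k
    unfold br
    by_cases h : μ ≤ 1 / F k
    · have hk : (⟨(i : ℕ) + 1, hi⟩ : Fin K) ≤ k := by
        by_contra hc
        push_neg at hc
        have hv : (k : ℕ) < (i : ℕ) + 1 := Fin.lt_iff_val_lt_val.mp hc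
        have : k ≤ i := Fin.le_iff_val_le_val.mpr (by omega)
        rcases eq_or_lt_of_le this with he | hl
        · exact absurd h (not_le.mpr (he ▸ hμ1))
        · exact absurd h (not_le.mpr (lt_trans (hsort k i hl) hμ1))
      have : μ' ≤ 1 / F k := by
        rcases eq_or_lt_of_le hk with he | hl
        · rw [← he]
        · exact le_of_lt (hsort _ _ hl)
      rw [if_pos h, if_pos this]
    · have : ¬ μ' ≤ 1 / F k := fun hh => h (le_of_lt (lt_of_lt_of_le hμ2 hh))
      rw [if_neg h, if_neg this]
  have hload : load m C F μ = load m C F μ' := by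
    unfold load; exact Finset.sum_congr rfl fun k _ => by rw [hbr k]
  have hLnn : 0 ≤ load m C F μ := by
    apply Finset.sum_nonneg
    intro k _
    exact mul_nonneg (by unfold br; split <;> [exact (hm k).le; exact le_rfl]) (hC k).le
  refine ⟨hbr, hload, ?_, ?_⟩
  · unfold rev; rw [← hload]; exact mul_le_mul_of_nonneg_right hμ2.le hLnn
  · intro hL; unfold rev; rw [← hload]; exact mul_lt_mul_of_pos_right hμ2 hL
end

section
/- Suppose 1/F_1 < 1/F_2 < … < 1/F_K. For every feasible price μ > 0 with L(μ) > 0, there exists k ∈ {1, …, K} such that the candidate price 1/F_k is feasible and U_B(1/F_k) ≥ U_B(μ). -/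
/-- For every feasible price with positive load, some candidate price 1/F_k is
feasible and earns at least as much revenue. -/
theorem stmt_11 (K : ℕ) (hK : 1 ≤ K) (m C F : Fin K → ℝ)
    (hm : ∀ k, 0 < m k) (hC : ∀ k, 0 < C k) (hF : ∀ k, 0 < F k)
    (hsort : ∀ j k : Fin K, j < k → 1 / F j < 1 / F k)
    (Fbar : ℝ) (hFbar : 0 ≤ Fbar)
    (μ : ℝ) (hμ : 0 < μ) (hfeas : load m C F μ ≤ Fbar) (hpos : 0 < load m C F μ) :
    ∃ k : Fin K, load m C F (1 / F k) ≤ Fbar ∧ rev m C F μ ≤ rev m C F (1 / F k) := by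
  classical
  set S : Finset (Fin K) := Finset.univ.filter (fun k => μ ≤ 1 / F k) with hS
  have hSne : S.Nonempty := by
    by_contra h
    rw [Finset.not_nonempty_iff_eq_empty] at h
    have : load m C F μ = 0 := by
      unfold load br
      apply Finset.sum_eq_zero
      intro k _
      have hk : ¬ μ ≤ 1 / F k := by
        intro hle
        have : k ∈ S := Finset.mem_filter.mpr ⟨Finset.mem_univ k, hle⟩
        rw [h] at this
        exact absurd this (Finset.notMem_empty k)
      rw [if_neg hk, zero_mul]
    linarith
  set k₀ := S.min' hSne with hk₀
  have hk₀S := S.min'_mem hSne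
  have hk₀min : ∀ j ∈ S, k₀ ≤ j := fun j hj => S.min'_le j hj
  have hμk₀ : μ ≤ 1 / F k₀ := (Finset.mem_filter.mp hk₀S).2
  have hmono : ∀ i j : Fin K, i ≤ j → 1 / F i ≤ 1 / F j := by
    intro i j hij
    rcases eq_or_lt_of_le hij with h | h
    · rw [h]
    · exact (hsort i j h).le
  have hiff : ∀ j : Fin K, (μ ≤ 1 / F j) ↔ (1 / F k₀ ≤ 1 / F j) := by
    intro j
    constructor
    · intro hle
      exact hmono k₀ j (hk₀min j (Finset.mem_filter.mpr ⟨Finset.mem_univ j, hle⟩))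
    · intro hle
      linarith
  have hload : load m C F (1 / F k₀) = load m C F μ := by
    unfold load br
    apply Finset.sum_congr rfl
    intro j _
    by_cases h : μ ≤ 1 / F j
    · rw [if_pos h, if_pos ((hiff j).mp h)]
    · rw [if_neg h, if_neg (fun hc => h ((hiff j).mpr hc))]
  refine ⟨k₀, by rw [hload]; exact hfeas, ?_⟩
  unfold rev
  rw [hload]
  exact mul_le_mul_of_nonneg_right hμk₀ hpos.le
end

section
/- (Proposition 2) Suppose 1/F_1 < 1/F_2 < … < 1/F_K. If μ* > 0 is a feasible price that maximizes the revenue over all feasible prices (i.e., L(μ*) ≤ F̄ and U_B(μ*) ≥ U_B(μ) for every μ > 0 with L(μ) ≤ F̄), and if U_B(μ*) > 0, then μ* belongs to the finite set {1/F_1, 1/F_2, …, 1/F_K}. -/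
/-- Proposition 2: any revenue-maximizing feasible price with positive revenue
belongs to the finite set {1/F_1, …, 1/F_K}. -/
theorem stmt_12 (K : ℕ) (hK : 1 ≤ K) (m C F : Fin K → ℝ)
    (hm : ∀ k, 0 < m k) (hC : ∀ k, 0 < C k) (hF : ∀ k, 0 < F k)
    (hsort : ∀ j k : Fin K, j < k → 1 / F j < 1 / F k)
    (Fbar : ℝ) (hFbar : 0 ≤ Fbar)
    (μstar : ℝ) (hμstar : 0 < μstar) (hfeas : load m C F μstar ≤ Fbar)
    (hopt : ∀ μ : ℝ, 0 < μ → load m C F μ ≤ Fbar → rev m C F μ ≤ rev m C F μstar)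
    (hpos : 0 < rev m C F μstar) :
    ∃ k : Fin K, μstar = 1 / F k := by
  by_contra h
  push_neg at h
  -- load is positive
  have hL : 0 < load m C F μstar := by
    by_contra hle
    push_neg at hle
    have : rev m C F μstar ≤ 0 := by
      unfold rev; exact mul_nonpos_of_nonneg_of_nonpos hμstar.le hle
    linarith
  -- some user active at μstar
  have hex : ∃ k, μstar < 1 / F k := by
    by_contra hno
    push_neg at hno
    have : load m C F μstar = 0 := by
      unfold load br
      apply Finset.sum_eq_zero
      intro k _
      have hne : ¬ μstar ≤ 1 / F k := by
        intro hle
        exact (h k) (le_antisymm hle (hno k))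
      rw [if_neg hne, zero_mul]
    linarith
  -- take the smallest threshold above μstar
  obtain ⟨S, hS⟩ : ∃ S : Finset (Fin K), ∀ k, k ∈ S ↔ μstar < 1 / F k :=
    ⟨Finset.univ.filter (fun k => μstar < 1 / F k), by simp⟩
  have hSne : S.Nonempty := by
    obtain ⟨k, hk⟩ := hex
    exact ⟨k, (hS k).mpr hk⟩
  obtain ⟨k1, hk1S, hk1min⟩ := S.exists_min_image (fun k => 1 / F k) hSne
  set μ' := 1 / F k1 with hμ'
  have hμstar_lt : μstar < μ' := (hS k1).mp hk1S
  -- loads coincide at μ' and μstar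
  have hload : load m C F μ' = load m C F μstar := by
    unfold load br
    apply Finset.sum_congr rfl
    intro k _
    by_cases hk : μstar ≤ 1 / F k
    · have hlt : μstar < 1 / F k := lt_of_le_of_ne hk (h k)
      have hkS : k ∈ S := (hS k).mpr hlt
      have : μ' ≤ 1 / F k := hk1min k hkS
      rw [if_pos this, if_pos hk]
    · push_neg at hk
      have : ¬ μ' ≤ 1 / F k := by linarith
      rw [if_neg this, if_neg (not_le.mpr hk)]
  have hfeas' : load m C F μ' ≤ Fbar := by rw [hload]; exact hfeas
  have hopt' := hopt μ' ((lt_trans hμstar hμstar_lt)) hfeas'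
  unfold rev at hopt'
  rw [hload] at hopt'
  nlinarith
end

section
/- (Equivalence of Problem P4 and the binary knapsack problem P4′) The supremum of the differentiated revenue Σ_{k=1}^K μ_k·ℓ_k(μ_k)·C_k over all feasible price vectors (μ_1, …, μ_K) with μ_k > 0 equals the maximum of Σ_{k∈S} m_k·C_k/F_k over all subsets S ⊆ {1, …, K} satisfying the knapsack constraint Σ_{k∈S} m_k·C_k ≤ F̄; moreover this supremum is attained, e.g., by setting μ_k = 1/F_k for k in an optimal subset S and μ_k > 1/F_k for k ∉ S. -/
/-- The differentiated revenue of a price vector μ. -/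
noncomputable def drev {K : ℕ} (m C F : Fin K → ℝ) (μ : Fin K → ℝ) : ℝ :=
  ∑ k, μ k * (if μ k ≤ 1 / F k then m k else 0) * C k

/-- The offloaded load of a price vector μ. -/
noncomputable def dload {K : ℕ} (m C F : Fin K → ℝ) (μ : Fin K → ℝ) : ℝ :=
  ∑ k, (if μ k ≤ 1 / F k then m k else 0) * C k

/-- Equivalence of Problem P4 and the binary knapsack problem P4′: the supremum of the
differentiated revenue over feasible positive price vectors is attained and equals the
optimal knapsack value; it is achieved by pricing 1/F_k inside an optimal subset S and
any higher price (e.g. 1/F_k + 1) outside S. -/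
theorem stmt_14 (K : ℕ) (hK : 1 ≤ K) (m C F : Fin K → ℝ)
    (hm : ∀ k, 0 < m k) (hC : ∀ k, 0 < C k) (hF : ∀ k, 0 < F k)
    (Fbar : ℝ) (hFbar : 0 ≤ Fbar) :
    ∃ S : Finset (Fin K),
      (∑ k ∈ S, m k * C k ≤ Fbar) ∧
      (∀ T : Finset (Fin K), (∑ k ∈ T, m k * C k ≤ Fbar) →
        ∑ k ∈ T, m k * C k / F k ≤ ∑ k ∈ S, m k * C k / F k) ∧
      IsGreatest
        {r : ℝ | ∃ μ : Fin K → ℝ, (∀ k, 0 < μ k) ∧ dload m C F μ ≤ Fbar ∧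
          r = drev m C F μ}
        (∑ k ∈ S, m k * C k / F k) ∧
      ((∀ k, 0 < (if k ∈ S then 1 / F k else 1 / F k + 1)) ∧
        dload m C F (fun k => if k ∈ S then 1 / F k else 1 / F k + 1) ≤ Fbar ∧
        drev m C F (fun k => if k ∈ S then 1 / F k else 1 / F k + 1) =
          ∑ k ∈ S, m k * C k / F k) := by
  -- the finite family of feasible subsets
  set 𝒮 : Finset (Finset (Fin K)) :=
    Finset.univ.filter (fun T => ∑ k ∈ T, m k * C k ≤ Fbar) with h𝒮
  have hne : 𝒮.Nonempty := ⟨∅, by simp [h𝒮, hFbar]⟩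
  obtain ⟨S, hSmem, hSmax⟩ :=
    𝒮.exists_max_image (fun T => ∑ k ∈ T, m k * C k / F k) hne
  have hSfeas : ∑ k ∈ S, m k * C k ≤ Fbar := by
    simpa [h𝒮] using hSmem
  have hmax : ∀ T : Finset (Fin K), (∑ k ∈ T, m k * C k ≤ Fbar) →
      ∑ k ∈ T, m k * C k / F k ≤ ∑ k ∈ S, m k * C k / F k := by
    intro T hT
    exact hSmax T (by simp [h𝒮, hT])
  -- the witness price vector
  set μ₀ : Fin K → ℝ := fun k => if k ∈ S then 1 / F k else 1 / F k + 1 with hμ₀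
  have hpos : ∀ k, 0 < μ₀ k := by
    intro k
    have hFk := hF k
    by_cases h : k ∈ S <;> simp [hμ₀, h] <;> positivity
  have hif : ∀ k, (if μ₀ k ≤ 1 / F k then m k else 0) = if k ∈ S then m k else 0 := by
    intro k
    by_cases h : k ∈ S
    · simp [hμ₀, h]
    · have : ¬ (1 / F k + 1 ≤ 1 / F k) := by linarith
      simp [hμ₀, h, this]
  have hload : dload m C F μ₀ = ∑ k ∈ S, m k * C k := by
    unfold dload
    calc ∑ k, (if μ₀ k ≤ 1 / F k then m k else 0) * C k
        = ∑ k, if k ∈ S then m k * C k else 0 := by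
          refine Finset.sum_congr rfl fun k _ => ?_
          rw [hif k, ite_mul, zero_mul]
      _ = ∑ k ∈ S, m k * C k := by
          rw [Finset.sum_ite_mem, Finset.univ_inter]
  have hrev : drev m C F μ₀ = ∑ k ∈ S, m k * C k / F k := by
    unfold drev
    calc ∑ k, μ₀ k * (if μ₀ k ≤ 1 / F k then m k else 0) * C k
        = ∑ k, if k ∈ S then m k * C k / F k else 0 := by
          refine Finset.sum_congr rfl fun k _ => ?_
          rw [hif k]
          by_cases h : k ∈ S
          · simp only [hμ₀, h, if_true]
            field_simp
          · simp [h]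
      _ = ∑ k ∈ S, m k * C k / F k := by
          rw [Finset.sum_ite_mem, Finset.univ_inter]
  refine ⟨S, hSfeas, hmax, ⟨⟨μ₀, hpos, hload ▸ hSfeas, hrev.symm⟩, ?_⟩,
    hpos, hload ▸ hSfeas, hrev⟩
  -- upper bound
  rintro r ⟨μ, hμpos, hμload, rfl⟩
  set T : Finset (Fin K) := Finset.univ.filter (fun k => μ k ≤ 1 / F k) with hT
  have hloadT : dload m C F μ = ∑ k ∈ T, m k * C k := by
    unfold dload
    calc ∑ k, (if μ k ≤ 1 / F k then m k else 0) * C k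
        = ∑ k, if μ k ≤ 1 / F k then m k * C k else 0 := by
          refine Finset.sum_congr rfl fun k _ => ?_
          rw [ite_mul, zero_mul]
      _ = ∑ k ∈ T, m k * C k := by
          rw [hT, Finset.sum_filter]
  have hTfeas : ∑ k ∈ T, m k * C k ≤ Fbar := hloadT ▸ hμload
  have hrevT : drev m C F μ ≤ ∑ k ∈ T, m k * C k / F k := by
    unfold drev
    calc ∑ k, μ k * (if μ k ≤ 1 / F k then m k else 0) * C k
        = ∑ k ∈ T, μ k * m k * C k := by
          rw [hT, Finset.sum_filter]
          refine Finset.sum_congr rfl fun k _ => ?_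
          by_cases h : μ k ≤ 1 / F k <;> simp [h]
      _ ≤ ∑ k ∈ T, m k * C k / F k := by
          refine Finset.sum_le_sum fun k hk => ?_
          have hkle : μ k ≤ 1 / F k := by simpa [hT] using hk
          have : μ k * m k * C k ≤ 1 / F k * m k * C k := by
            have := mul_pos (hm k) (hC k)
            nlinarith
          calc μ k * m k * C k ≤ 1 / F k * m k * C k := this
            _ = m k * C k / F k := by field_simp
  exact hrevT.trans (hmax T hTfeas)
end

section
/- (Differentiated pricing dominates uniform pricing) For every uniform price μ > 0 that is feasible (Σ_{k=1}^K ℓ_k(μ)·C_k ≤ F̄), the subset S = {k : μ ≤ 1/F_k} satisfies the knapsack constraint Σ_{k∈S} m_k·C_k ≤ F̄ and its knapsack value dominates the uniform revenue: μ·Σ_{k=1}^K ℓ_k(μ)·C_k ≤ Σ_{k∈S} m_k·C_k/F_k. Consequently the maximal feasible differentiated revenue is at least the maximal feasible uniform revenue. -/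
lemma load_eq {K : ℕ} (m C F : Fin K → ℝ) (μ : ℝ) :
    load m C F μ = ∑ k ∈ Finset.univ.filter (fun k => μ ≤ 1 / F k), m k * C k := by
  rw [load, Finset.sum_filter]
  exact Finset.sum_congr rfl fun k _ => by rw [br, ite_mul, zero_mul]

/-- Differentiated pricing dominates uniform pricing: for any feasible uniform price μ,
the subset S = {k : μ ≤ 1/F_k} satisfies the knapsack constraint and its knapsack value
is at least the uniform revenue. -/
theorem stmt_15 (K : ℕ) (hK : 1 ≤ K) (m C F : Fin K → ℝ)
    (hm : ∀ k, 0 < m k) (hC : ∀ k, 0 < C k) (hF : ∀ k, 0 < F k)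
    (Fbar : ℝ) (hFbar : 0 ≤ Fbar)
    (μ : ℝ) (hμ : 0 < μ) (hfeas : load m C F μ ≤ Fbar) :
    (∑ k ∈ Finset.univ.filter (fun k => μ ≤ 1 / F k), m k * C k ≤ Fbar) ∧
      μ * load m C F μ ≤
        ∑ k ∈ Finset.univ.filter (fun k => μ ≤ 1 / F k), m k * C k / F k := by
  rw [← load_eq]
  refine ⟨hfeas, ?_⟩
  rw [load_eq, Finset.mul_sum]
  refine Finset.sum_le_sum fun k hk => ?_
  simp only [Finset.mem_filter] at hk
  have h := hk.2
  have hmk := (hm k).le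
  have hck := (hC k).le
  rw [div_eq_mul_inv, ← one_div]
  calc μ * (m k * C k) ≤ (1 / F k) * (m k * C k) := by
        exact mul_le_mul_of_nonneg_right h (by positivity)
    _ = m k * C k * (1 / F k) := by ring
end
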